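/- Let φ₁, …, φ_M : ℝ → ℂ be square-integrable functions supported on [-1,1], and define the matrix-valued function Φ(t) with entries Φᵢⱼ(t) = ∫ℝ conj(φᵢ(x)) φⱼ(x + t) dx. Then for any positive semidefinite Hermitian M × M matrix A, the function K_A(t) = trace(A · Φ(t)) is positive definite on ℝ. -/

import Mathlib

/-!
The substitution `y = x + t_j` turns each entry of `Φ (t_j - t_i)` into the `L²` pairing of the
translates `φ_l (· - t_j)` and `φ_k (· - t_i)`. Hence, with `F y = ∑ i, conj (c i) • φ (y - t_i)`
(a vector in `ℂ^M`), the quadratic form `∑ i j, conj (c i) * c j * tr (A Φ (t_j - t_i))` is the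
integral of `F y ⬝ A (conj F y)`, which is pointwise nonnegative because `A` is positive
semidefinite.
-/

open MeasureTheory Matrix ComplexConjugate
open scoped ComplexOrder

lemma dotProduct_mulVec_star_eq_sum {ι : Type*} [Fintype ι] (A : Matrix ι ι ℂ) (u v : ι → ℂ) :
    u ⬝ᵥ A *ᵥ star v = ∑ k, ∑ l, A k l * (conj (v l) * u k) := by
  simp only [dotProduct, mulVec, Finset.mul_sum, Pi.star_apply, RCLike.star_def]
  refine Finset.sum_congr rfl fun k _ => Finset.sum_congr rfl fun l _ => ?_
  ring

lemma Matrix.PosSemidef.sum_conj_mul_mul_dotProduct_mulVec_star_nonneg {ι n : Type*} [Fintype ι]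
    [Fintype n] {A : Matrix ι ι ℂ} (hA : A.PosSemidef) (x : n → ι → ℂ) (c : n → ℂ) :
    0 ≤ ∑ i, ∑ j, conj (c i) * c j * (x i ⬝ᵥ A *ᵥ star (x j)) := by
  have hexpand : (∑ i, conj (c i) • x i) ⬝ᵥ A *ᵥ star (∑ j, conj (c j) • x j) =
      ∑ i, ∑ j, conj (c i) * c j * (x i ⬝ᵥ A *ᵥ star (x j)) := by
    simp only [star_sum, star_smul, mulVec_sum, mulVec_smul, dotProduct_sum, sum_dotProduct,
      dotProduct_smul, smul_dotProduct, smul_eq_mul, Complex.star_def, Complex.conj_conj,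
      Finset.mul_sum]
    rw [Finset.sum_comm]
    exact Finset.sum_congr rfl fun i _ => Finset.sum_congr rfl fun j _ => by ring
  simpa only [← hexpand, star_star] using
    hA.dotProduct_mulVec_nonneg (star (∑ i, conj (c i) • x i))

section SquareIntegrable

variable {α ι : Type*} [MeasurableSpace α] {μ : Measure α} [Fintype ι]

lemma integrable_conj_mul_of_memLp_two {f g : α → ℂ} (hf : MemLp f 2 μ) (hg : MemLp g 2 μ) :
    Integrable (fun y => conj (f y) * g y) μ :=
  hf.star.integrable_mul hg

lemma integral_dotProduct_mulVec_star (A : Matrix ι ι ℂ) {u v : α → ι → ℂ}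
    (hu : ∀ k, MemLp (fun y => u y k) 2 μ) (hv : ∀ l, MemLp (fun y => v y l) 2 μ) :
    ∫ y, u y ⬝ᵥ A *ᵥ star (v y) ∂μ = ∑ k, ∑ l, A k l * ∫ y, conj (v y l) * u y k ∂μ := by
  have hint k l : Integrable (fun y => A k l * (conj (v y l) * u y k)) μ :=
    (integrable_conj_mul_of_memLp_two (hv l) (hu k)).const_mul _
  simp_rw [dotProduct_mulVec_star_eq_sum]
  rw [integral_finsetSum _ fun k _ => integrable_finsetSum _ fun l _ => hint k l]
  refine Finset.sum_congr rfl fun k _ => ?_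
  rw [integral_finsetSum _ fun l _ => hint k l]
  simp_rw [integral_const_mul]

lemma integrable_dotProduct_mulVec_star (A : Matrix ι ι ℂ) {u v : α → ι → ℂ}
    (hu : ∀ k, MemLp (fun y => u y k) 2 μ) (hv : ∀ l, MemLp (fun y => v y l) 2 μ) :
    Integrable (fun y => u y ⬝ᵥ A *ᵥ star (v y)) μ := by
  simp_rw [dotProduct_mulVec_star_eq_sum]
  exact integrable_finsetSum _ fun k _ => integrable_finsetSum _ fun l _ =>
    (integrable_conj_mul_of_memLp_two (hv l) (hu k)).const_mul _

end SquareIntegrable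

section Correlation

variable {G ι : Type*} [MeasurableSpace G] [AddGroup G] [MeasurableAdd G] {μ : Measure G}
  [μ.IsAddRightInvariant]

lemma integral_conj_comp_sub_mul_comp_sub (f g : G → ℂ) (a b : G) :
    ∫ y, conj (f (y - b)) * g (y - a) ∂μ = ∫ x, conj (f x) * g (x + (b - a)) ∂μ := by
  rw [← integral_sub_right_eq_self (fun x => conj (f x) * g (x + (b - a))) b]
  simp only [sub_add_sub_cancel]

variable [Fintype ι] {φ : ι → G → ℂ} {Φ : G → Matrix ι ι ℂ}

lemma trace_mul_correlation_eq_integral (A : Matrix ι ι ℂ) (hφ : ∀ k, MemLp (φ k) 2 μ)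
    (hΦ : ∀ t k l, Φ t k l = ∫ x, conj (φ k x) * φ l (x + t) ∂μ) (a b : G) :
    (A * Φ (b - a)).trace =
      ∫ y, (fun k => φ k (y - a)) ⬝ᵥ A *ᵥ star (fun l => φ l (y - b)) ∂μ := by
  rw [integral_dotProduct_mulVec_star (u := fun y k => φ k (y - a)) (v := fun y l => φ l (y - b))
    A    (fun k => (hφ k).comp_measurePreserving (measurePreserving_sub_right μ a))
    (fun l => (hφ l).comp_measurePreserving (measurePreserving_sub_right μ b))]
  simp only [trace, diag, mul_apply, hΦ, integral_conj_comp_sub_mul_comp_sub]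

theorem Matrix.PosSemidef.sum_conj_mul_mul_trace_mul_correlation_nonneg {A : Matrix ι ι ℂ}
    (hA : A.PosSemidef) (hφ : ∀ k, MemLp (φ k) 2 μ)
    (hΦ : ∀ t k l, Φ t k l = ∫ x, conj (φ k x) * φ l (x + t) ∂μ)
    {n : Type*} [Fintype n] (t : n → G) (c : n → ℂ) :
    0 ≤ ∑ i, ∑ j, conj (c i) * c j * (A * Φ (t j - t i)).trace := by
  set x : n → G → ι → ℂ := fun i y k => φ k (y - t i)
  have hx i k : MemLp (fun y => x i y k) 2 μ :=
    (hφ k).comp_measurePreserving (measurePreserving_sub_right μ (t i))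
  have hint i j : Integrable (fun y => conj (c i) * c j * (x i y ⬝ᵥ A *ᵥ star (x j y))) μ :=
    (integrable_dotProduct_mulVec_star A (hx i) (hx j)).const_mul _
  calc 0 ≤ ∫ y, ∑ i, ∑ j, conj (c i) * c j * (x i y ⬝ᵥ A *ᵥ star (x j y)) ∂μ :=
        integral_nonneg fun y => hA.sum_conj_mul_mul_dotProduct_mulVec_star_nonneg (x · y) c
    _ = ∑ i, ∑ j, conj (c i) * c j * (A * Φ (t j - t i)).trace := by
        rw [integral_finsetSum _ fun i _ => integrable_finsetSum _ fun j _ => hint i j]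
        refine Finset.sum_congr rfl fun i _ => ?_
        rw [integral_finsetSum _ fun j _ => hint i j]
        simp_rw [integral_const_mul, trace_mul_correlation_eq_integral A hφ hΦ]
        rfl

end Correlation

theorem trace_kernel_posdef_general
    (M : ℕ) (φ : Fin M → ℝ → ℂ)
    (hφ : ∀ i, MemLp (φ i) 2 volume)
    (Φ : ℝ → Matrix (Fin M) (Fin M) ℂ)
    (hΦ : ∀ (t : ℝ) (i j : Fin M),
      Φ t i j = ∫ x : ℝ, (starRingEnd ℂ) (φ i x) * φ j (x + t))
    (A : Matrix (Fin M) (Fin M) ℂ) (hA : A.PosSemidef) :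
    ∀ (n : ℕ) (t : Fin n → ℝ) (c : Fin n → ℂ),
      0 ≤ ∑ i, ∑ j, (starRingEnd ℂ) (c i) * c j * (A * Φ (t j - t i)).trace :=
  fun _ t c => hA.sum_conj_mul_mul_trace_mul_correlation_nonneg hφ hΦ t c

theorem trace_kernel_posdef
    (M : ℕ) (φ : Fin M → ℝ → ℂ)
    (hφ : ∀ i, MemLp (φ i) 2 volume)
    (hsupp : ∀ i, ∀ x : ℝ, x ∉ Set.Icc (-1 : ℝ) 1 → φ i x = 0)
    (Φ : ℝ → Matrix (Fin M) (Fin M) ℂ)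
    (hΦ : ∀ (t : ℝ) (i j : Fin M),
      Φ t i j = ∫ x : ℝ, (starRingEnd ℂ) (φ i x) * φ j (x + t))
    (A : Matrix (Fin M) (Fin M) ℂ) (hA : A.PosSemidef) :
    ∀ (n : ℕ) (t : Fin n → ℝ) (c : Fin n → ℂ),
      0 ≤ ∑ i, ∑ j, (starRingEnd ℂ) (c i) * c j * (A * Φ (t j - t i)).trace :=
  trace_kernel_posdef_general M φ hφ Φ hΦ A hA
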